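/- arXiv:1106.5979 — 4 statements merged into one kernel-verified Lean document; each statement's English description precedes it below -/
import Mathlib

section
/- Let o₁ = [l₁,u₁] and o₂ = [l₂,u₂] be two uncertain 1D objects of equal length, i.e. u₁ − l₁ = u₂ − l₂, with distinct midpoints m₁ < m₂, and let b = (m₁ + m₂)/2 be the bisector of the midpoints. Then p(b) = 1/2; moreover p(q) > 1/2 for every q < b, and p(q) < 1/2 for every q > b. In other words, the probabilistic bisector of two equi-range 1D objects is the bisector of their midpoints. -/
/-!
Let `δ > 0` be the distance between the midpoints and write `D = y - x`, `S = x + y`, so that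
`|x - q| < |y - q|` means `D > 0, S > 2q` or `D < 0, S < 2q`. The law `ν` of `(x, y)` is
invariant under the swap-and-shift `(x, y) ↦ (y - δ, x + δ)`, which sends `D` to `2δ - D`, and
under the swap-and-reflect `(x, y) ↦ (2b - y, 2b - x)`, which sends `S` to `4b - S`; ties have
probability zero. By the first symmetry `p(q) - (1 - p(q))` is the mass of the strip
`0 < D < 2δ` above `S = 2q` minus its mass below; the second symmetry turns the mass below into
the mass above `S = 4b - 2q`. For `q < b` the difference is therefore the mass of
`{0 < D < 2δ, 2q < S < 4b - 2q}`, an open neighbourhood of the pair of midpoints, hence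
positive. The reflection also gives `p(q) = 1 - p(2b - q)`, which yields `p(b) = 1/2` and the
case `q > b`.
-/

open MeasureTheory
open scoped ENNReal

/-- The uniform probability measure on the closed interval `[a, b]`. -/
noncomputable def unif (a b : ℝ) : Measure ℝ :=
  (volume (Set.Icc a b))⁻¹ • volume.restrict (Set.Icc a b)

/-- Probability that the uncertain object `[l₁,u₁]` is nearer to the query point `q`
than the uncertain object `[l₂,u₂]`. -/
noncomputable def nnProb (l₁ u₁ l₂ u₂ q : ℝ) : ℝ≥0∞ :=
  ((unif l₁ u₁).prod (unif l₂ u₂)) {xy : ℝ × ℝ | |xy.1 - q| < |xy.2 - q|}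

open ProbabilityTheory Set

theorem abs_sub_lt_abs_sub_iff (x y q : ℝ) :
    |x - q| < |y - q| ↔ (x < y ∧ 2 * q < x + y) ∨ (y < x ∧ x + y < 2 * q) := by
  rw [← sq_lt_sq, ← sub_pos,
    show (y - q) ^ 2 - (x - q) ^ 2 = (y - x) * (x + y - 2 * q) by ring,
    mul_pos_iff, sub_pos, sub_pos, sub_neg, sub_neg]

def nearer (q : ℝ) : Set (ℝ × ℝ) := {p | |p.1 - q| < |p.2 - q|}

@[simp]
theorem mem_nearer {q : ℝ} {p : ℝ × ℝ} : p ∈ nearer q ↔ |p.1 - q| < |p.2 - q| := Iff.rfl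

theorem measurableSet_nearer (q : ℝ) : MeasurableSet (nearer q) :=
  measurableSet_lt (by fun_prop) (by fun_prop)

section Uniform

theorem unif_eq_cond (a b : ℝ) : unif a b = volume[|Icc a b] := rfl

instance (a b : ℝ) : IsZeroOrProbabilityMeasure (unif a b) :=
  inferInstanceAs (IsZeroOrProbabilityMeasure volume[|Icc a b])

instance (a b : ℝ) : NullSingletonClass (unif a b) :=
  ⟨fun x => by simp [unif]⟩

theorem isProbabilityMeasure_unif {a b : ℝ} (h : a < b) : IsProbabilityMeasure (unif a b) :=
  cond_isProbabilityMeasure_of_finite (by simp [h]) (by simp)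

theorem MeasureTheory.MeasurePreserving.unif {f : ℝ → ℝ} (hf : MeasurePreserving f)
    {a b a' b' : ℝ} (hpre : f ⁻¹' Icc a' b' = Icc a b) :
    MeasurePreserving f (unif a b) (unif a' b') := by
  have hvol : volume (Icc a b) = volume (Icc a' b') := by
    rw [← hpre, hf.measure_preimage measurableSet_Icc.nullMeasurableSet]
  have hrestrict := hf.restrict_preimage (measurableSet_Icc (a := a') (b := b'))
  rw [hpre] at hrestrict
  refine ⟨hf.measurable, ?_⟩
  rw [_root_.unif, _root_.unif, Measure.map_smul, hrestrict.map_eq, hvol]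

theorem unif_pos_of_isOpen {a b x : ℝ} {s : Set ℝ} (hs : IsOpen s) (hx : x ∈ s ∩ Ioo a b) :
    0 < unif a b s := by
  rw [unif_eq_cond, cond_apply measurableSet_Icc]
  refine ENNReal.mul_pos (by simp) (ne_of_gt ?_)
  calc 0 < volume (s ∩ Ioo a b) := (hs.inter isOpen_Ioo).measure_pos volume ⟨x, hx⟩
    _ ≤ volume (Icc a b ∩ s) := measure_mono fun y hy => ⟨Ioo_subset_Icc_self hy.2, hy.1⟩

theorem unif_prod_unif_pos_of_isOpen {a b c d : ℝ} {s : Set (ℝ × ℝ)} (hs : IsOpen s)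
    {x : ℝ × ℝ} (hx : x ∈ s) (hx₁ : x.1 ∈ Ioo a b) (hx₂ : x.2 ∈ Ioo c d) :
    0 < (unif a b).prod (unif c d) s := by
  obtain ⟨v, w, hv, hw, hxv, hxw, hvw⟩ := isOpen_prod_iff.1 hs x.1 x.2 hx
  calc 0 < unif a b v * unif c d w :=
        ENNReal.mul_pos (unif_pos_of_isOpen hv ⟨hxv, hx₁⟩).ne'
          (unif_pos_of_isOpen hw ⟨hxw, hx₂⟩).ne'
    _ = (unif a b).prod (unif c d) (v ×ˢ w) := (Measure.prod_prod v w).symm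
    _ ≤ _ := measure_mono hvw

end Uniform

theorem MeasureTheory.MeasurePreserving.prodMap_swap {α β : Type*} [MeasurableSpace α]
    [MeasurableSpace β] {μ : Measure α} {ν : Measure β} [SFinite μ] [SFinite ν]
    {f : α → β} {g : β → α} (hf : MeasurePreserving f μ ν) (hg : MeasurePreserving g ν μ) :
    MeasurePreserving (fun p : α × β => (g p.2, f p.1)) (μ.prod ν) (μ.prod ν) :=
  (hg.prod hf).comp Measure.measurePreserving_swap

theorem measurePreserving_unif_prod_shift (l u δ : ℝ) :
    MeasurePreserving (fun p : ℝ × ℝ => (p.2 - δ, p.1 + δ))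
      ((unif l u).prod (unif (l + δ) (u + δ))) ((unif l u).prod (unif (l + δ) (u + δ))) :=
  ((measurePreserving_add_right volume δ).unif (by simp)).prodMap_swap
    ((measurePreserving_sub_right volume δ).unif (by simp))

theorem measurePreserving_unif_prod_reflect {l₁ u₁ l₂ u₂ c : ℝ} (hl : l₁ + u₂ = c)
    (hu : u₁ + l₂ = c) :
    MeasurePreserving (fun p : ℝ × ℝ => (c - p.2, c - p.1))
      ((unif l₁ u₁).prod (unif l₂ u₂)) ((unif l₁ u₁).prod (unif l₂ u₂)) := by
  refine .prodMap_swap ((Measure.measurePreserving_sub_left volume c).unif ?_)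
    ((Measure.measurePreserving_sub_left volume c).unif ?_) <;>
  · rw [preimage_const_sub_Icc]
    congr 1 <;> linarith

theorem prod_abs_sub_eq_abs_sub_null (μ ν : Measure ℝ) [SFinite ν] [NullSingletonClass ν]
    (q : ℝ) : μ.prod ν {p | |p.1 - q| = |p.2 - q|} = 0 := by
  rw [Measure.measure_prod_null (measurableSet_eq_fun (by fun_prop) (by fun_prop))]
  refine Filter.Eventually.of_forall fun x => measure_mono_null (t := {x, 2 * q - x}) ?_
    ((toFinite _).measure_zero ν)
  intro y hy
  rcases abs_eq_abs.1 (show |x - q| = |y - q| from hy) with h | h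
  · exact .inl (show y = x by linarith)
  · exact .inr (show y = 2 * q - x by linarith)

section Symmetric

variable {ν : Measure (ℝ × ℝ)} [IsProbabilityMeasure ν]

theorem measureReal_nearer_add_measureReal_swap {q : ℝ}
    (hties : ν {p | |p.1 - q| = |p.2 - q|} = 0) :
    ν.real (nearer q) + ν.real (Prod.swap ⁻¹' nearer q) = 1 := by
  have hdisj : Disjoint (nearer q) (Prod.swap ⁻¹' nearer q) :=
    disjoint_left.2 fun p h h' => (lt_asymm h (show |p.2 - q| < |p.1 - q| from h')).elim
  have hcompl : nearer q ∪ Prod.swap ⁻¹' nearer q = {p | |p.1 - q| = |p.2 - q|}ᶜ := by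
    ext p
    simp only [mem_union, mem_nearer, mem_preimage, Prod.fst_swap, Prod.snd_swap, mem_compl_iff,
      mem_ofPred_eq, ← ne_iff_lt_or_gt]
  rw [← measureReal_union hdisj ((measurableSet_nearer q).preimage measurable_swap), hcompl,
    measureReal_def,
    (prob_compl_eq_one_iff (measurableSet_eq_fun (by fun_prop) (by fun_prop))).2 hties,
    ENNReal.toReal_one]

variable {δ b : ℝ}

theorem measureReal_preimage_shift_nearer_lt (hδ : 0 < δ)
    (hτ : MeasurePreserving (fun p : ℝ × ℝ => (2 * b - p.2, 2 * b - p.1)) ν ν)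
    (hdiag : ν {p | p.1 = p.2} = 0)
    (hpos : ∀ s, IsOpen s → (b - δ / 2, b + δ / 2) ∈ s → 0 < ν s) {q : ℝ} (hq : q < b) :
    ν.real ((fun p : ℝ × ℝ => (p.1 + δ, p.2 - δ)) ⁻¹' nearer q) < ν.real (nearer q) := by
  set E := nearer q
  set B := (fun p : ℝ × ℝ => (p.1 + δ, p.2 - δ)) ⁻¹' nearer q
  let ρ : ℝ × ℝ → ℝ × ℝ := fun p => (p.2 - p.1, p.1 + p.2)
  have hρ : Continuous ρ := by fun_prop
  let band (I : Set ℝ) : Set (ℝ × ℝ) := ρ ⁻¹' (Ioo 0 (2 * δ) ×ˢ I)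
  have hband (I : Set ℝ) (hI : MeasurableSet I) : MeasurableSet (band I) :=
    (measurableSet_Ioo.prod hI).preimage hρ.measurable
  have hB : MeasurableSet B := (measurableSet_nearer q).preimage (by fun_prop)
  have hBE : B \ E ⊆ band (Iio (2 * q)) ∪ {p | p.1 = p.2} := by
    rintro ⟨x, y⟩ ⟨hB, hE⟩
    simp only [B, E, band, ρ, mem_union, mem_preimage, mem_nearer, abs_sub_lt_abs_sub_iff,
      mem_prod, mem_Ioo, mem_Iio, mem_ofPred_eq] at hB hE ⊢
    grind
  have hEB : band (Ioi (2 * q)) ⊆ E \ B := by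
    rintro ⟨x, y⟩ h
    simp only [B, E, band, ρ, mem_sdiff, mem_preimage, mem_nearer, abs_sub_lt_abs_sub_iff,
      mem_prod, mem_Ioo, mem_Ioi] at h ⊢
    grind
  have hrefl : (fun p : ℝ × ℝ => (2 * b - p.2, 2 * b - p.1)) ⁻¹' band (Ioi (4 * b - 2 * q)) =
      band (Iio (2 * q)) := by
    ext ⟨x, y⟩
    simp only [band, ρ, mem_preimage, mem_prod, mem_Ioo, mem_Ioi, mem_Iio]
    grind
  have hsplit : band (Ioi (4 * b - 2 * q)) ∪ band (Ioo (2 * q) (4 * b - 2 * q)) ⊆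
      band (Ioi (2 * q)) := by
    rw [← preimage_union, ← prod_union]
    exact preimage_mono
      (prod_mono_right (union_subset (Ioi_subset_Ioi (by linarith)) Ioo_subset_Ioi_self))
  have hdisj : Disjoint (band (Ioi (4 * b - 2 * q))) (band (Ioo (2 * q) (4 * b - 2 * q))) :=
    (disjoint_prod.2 (.inr (Ioi_disjoint_Iio_same.mono_right Ioo_subset_Iio_self))).preimage ρ
  have hcentre : 0 < ν.real (band (Ioo (2 * q) (4 * b - 2 * q))) := by
    refine ENNReal.toReal_pos
      (hpos _ ((isOpen_Ioo.prod isOpen_Ioo).preimage hρ) ?_).ne' (measure_ne_top _ _)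
    simp only [ρ, mem_preimage, mem_prod, mem_Ioo]
    constructor <;> constructor <;> linarith
  have hbelow : ν.real (B \ E) ≤ ν.real (band (Iio (2 * q))) :=
    calc ν.real (B \ E) ≤ ν.real (band (Iio (2 * q)) ∪ {p | p.1 = p.2}) := measureReal_mono hBE
      _ ≤ ν.real (band (Iio (2 * q))) + ν.real {p | p.1 = p.2} := measureReal_union_le _ _
      _ = ν.real (band (Iio (2 * q))) := by simp [measureReal_def, hdiag]
  have hreflected : ν.real (band (Iio (2 * q))) = ν.real (band (Ioi (4 * b - 2 * q))) := by
    rw [← hrefl, measureReal_def, measureReal_def,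
      hτ.measure_preimage (hband _ measurableSet_Ioi).nullMeasurableSet]
  have habove : ν.real (band (Ioi (4 * b - 2 * q))) +
      ν.real (band (Ioo (2 * q) (4 * b - 2 * q))) ≤ ν.real (E \ B) := by
    rw [← measureReal_union hdisj (hband _ measurableSet_Ioo)]
    exact measureReal_mono (hsplit.trans hEB)
  have hB' := measureReal_inter_add_sdiff (μ := ν) (s := B) (measurableSet_nearer q)
  have hE' := measureReal_inter_add_sdiff (μ := ν) (s := E) hB
  rw [inter_comm] at hE'
  linarith

theorem measureReal_nearer_bisector (hδ : 0 < δ)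
    (hties : ∀ q, ν {p | |p.1 - q| = |p.2 - q|} = 0)
    (hφ : MeasurePreserving (fun p : ℝ × ℝ => (p.2 - δ, p.1 + δ)) ν ν)
    (hτ : MeasurePreserving (fun p : ℝ × ℝ => (2 * b - p.2, 2 * b - p.1)) ν ν)
    (hpos : ∀ s, IsOpen s → (b - δ / 2, b + δ / 2) ∈ s → 0 < ν s) :
    ν.real (nearer b) = 1 / 2 ∧ (∀ q < b, 1 / 2 < ν.real (nearer q)) ∧
      ∀ q > b, ν.real (nearer q) < 1 / 2 := by
  have hsum q := measureReal_nearer_add_measureReal_swap (hties q)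
  have hrefl q : ν.real (nearer q) = ν.real (Prod.swap ⁻¹' nearer (2 * b - q)) := by
    have hpre : (fun p : ℝ × ℝ => (2 * b - p.2, 2 * b - p.1)) ⁻¹' nearer q =
        Prod.swap ⁻¹' nearer (2 * b - q) := by
      ext p
      simp only [mem_preimage, mem_nearer, Prod.fst_swap, Prod.snd_swap]
      rw [show 2 * b - p.2 - q = -(p.2 - (2 * b - q)) by ring,
        show 2 * b - p.1 - q = -(p.1 - (2 * b - q)) by ring, abs_neg, abs_neg]
    rw [← hpre, measureReal_def, measureReal_def,
      hτ.measure_preimage (measurableSet_nearer q).nullMeasurableSet]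
  have hlt q (hq : q < b) : ν.real (Prod.swap ⁻¹' nearer q) < ν.real (nearer q) := by
    rw [measureReal_def, ← hφ.measure_preimage
      ((measurableSet_nearer q).preimage measurable_swap).nullMeasurableSet, ← measureReal_def]
    exact measureReal_preimage_shift_nearer_lt hδ hτ
      (measure_mono_null (fun p (h : p.1 = p.2) => by simp [h]) (hties q)) hpos hq
  refine ⟨?_, fun q hq => ?_, fun q hq => ?_⟩
  · have hsymm := hrefl b
    rw [two_mul, add_sub_cancel_right] at hsymm
    linarith [hsum b]
  · linarith [hsum q, hlt q hq]
  · linarith [hsum (2 * b - q), hrefl q, hlt (2 * b - q) (by linarith)]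

end Symmetric

theorem nnProb_eq_ofReal (l₁ u₁ l₂ u₂ q : ℝ) :
    nnProb l₁ u₁ l₂ u₂ q = ENNReal.ofReal (((unif l₁ u₁).prod (unif l₂ u₂)).real (nearer q)) :=
  (ofReal_measureReal (measure_ne_top _ _)).symm

theorem prob_bisector_equi_range_general (l₁ u₁ l₂ u₂ b : ℝ)
    (h₁ : l₁ < u₁)
    (hlen : u₁ - l₁ = u₂ - l₂)
    (hmid : (l₁ + u₁) / 2 < (l₂ + u₂) / 2)
    (hb : b = ((l₁ + u₁) / 2 + (l₂ + u₂) / 2) / 2) :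
    nnProb l₁ u₁ l₂ u₂ b = 1 / 2 ∧
    (∀ q : ℝ, q < b → nnProb l₁ u₁ l₂ u₂ q > 1 / 2) ∧
    (∀ q : ℝ, q > b → nnProb l₁ u₁ l₂ u₂ q < 1 / 2) := by
  obtain ⟨δ, rfl, rfl⟩ : ∃ δ, l₂ = l₁ + δ ∧ u₂ = u₁ + δ := ⟨l₂ - l₁, by ring, by linarith⟩
  have hδ : 0 < δ := by linarith
  have := isProbabilityMeasure_unif h₁
  have := isProbabilityMeasure_unif (by linarith : l₁ + δ < u₁ + δ)
  obtain ⟨hbis, hleft, hright⟩ := measureReal_nearer_bisector hδ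
    (prod_abs_sub_eq_abs_sub_null _ _) (measurePreserving_unif_prod_shift l₁ u₁ δ)
    (measurePreserving_unif_prod_reflect (by linarith) (by linarith))
    (fun s hs hc => unif_prod_unif_pos_of_isOpen hs hc
      ⟨by linarith, by linarith⟩ ⟨by linarith, by linarith⟩)
  have half : (1 / 2 : ℝ≥0∞) = ENNReal.ofReal (1 / 2) := by
    rw [ENNReal.ofReal_div_of_pos two_pos]; simp
  simp only [nnProb_eq_ofReal, half, gt_iff_lt]
  exact ⟨by rw [hbis], fun q hq => (ENNReal.ofReal_lt_ofReal_iff_of_nonneg (by positivity)).2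
    (hleft q hq), fun q hq => (ENNReal.ofReal_lt_ofReal_iff (by norm_num)).2 (hright q hq)⟩

theorem prob_bisector_equi_range (l₁ u₁ l₂ u₂ b : ℝ)
    (h₁ : l₁ < u₁) (h₂ : l₂ < u₂)
    (hlen : u₁ - l₁ = u₂ - l₂)
    (hmid : (l₁ + u₁) / 2 < (l₂ + u₂) / 2)
    (hb : b = ((l₁ + u₁) / 2 + (l₂ + u₂) / 2) / 2) :
    nnProb l₁ u₁ l₂ u₂ b = 1 / 2 ∧
    (∀ q : ℝ, q < b → nnProb l₁ u₁ l₂ u₂ q > 1 / 2) ∧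
    (∀ q : ℝ, q > b → nnProb l₁ u₁ l₂ u₂ q < 1 / 2) :=
  prob_bisector_equi_range_general l₁ u₁ l₂ u₂ b h₁ hlen hmid hb
end

section
/- The probabilistic bisector of two equi-range 1D objects is unaffected by the presence of a third object: let o₁ = [l₁,u₁], o₂ = [l₂,u₂] and o₃ = [l₃,u₃] be three uncertain 1D objects, modeled by the triple product measure U[l₁,u₁] ⊗ U[l₂,u₂] ⊗ U[l₃,u₃], such that u₁ − l₁ = u₂ − l₂ and the midpoints m₁ = (l₁+u₁)/2 and m₂ = (l₂+u₂)/2 are distinct. Then at the point b = (m₁+m₂)/2, the probability that o₁ is strictly the nearest of the three objects to b equals the probability that o₂ is strictly the nearest of the three objects to b; that is, the product measure of {(x,y,z) | |x−b| < |y−b| and |x−b| < |z−b|} equals the product measure of {(x,y,z) | |y−b| < |x−b| and |y−b| < |z−b|}. -/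
/-! Equal ranges and `b` the midpoint of the two centres make the reflection `x ↦ 2b - x`
swap `U[l₁,u₁]` and `U[l₂,u₂]`. Exchanging the first two coordinates through this reflection
therefore preserves the product measure; it also preserves every distance to `b`, so it carries
the event "o₂ is strictly nearest" onto "o₁ is strictly nearest". -/

open MeasureTheory
open scoped ENNReal

instance unif.instSFinite (a c : ℝ) : SFinite (unif a c) := by
  unfold unif; infer_instance

theorem unif_map_sub_left (a c t : ℝ) :
    (unif a c).map (t - ·) = unif (t - c) (t - a) := by
  have hmp : MeasurePreserving (t - ·) (volume : Measure ℝ) volume :=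
    Measure.measurePreserving_sub_left volume t
  have hpre : (t - ·) ⁻¹' Set.Icc (t - c) (t - a) = Set.Icc a c := by
    ext x
    simp only [Set.mem_preimage, Set.mem_Icc]
    constructor <;> rintro ⟨h₁, h₂⟩ <;> constructor <;> linarith
  have hvol : volume (Set.Icc (t - c) (t - a)) = volume (Set.Icc a c) := by
    rw [Real.volume_Icc, Real.volume_Icc]; ring_nf
  have hrestrict : (volume.restrict (Set.Icc a c)).map (t - ·)
      = volume.restrict (Set.Icc (t - c) (t - a)) := by
    rw [← hpre, ← Measure.restrict_map hmp.measurable measurableSet_Icc, hmp.map_eq]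
  rw [unif, unif, Measure.map_smul, hvol, hrestrict]

theorem measurePreserving_unif_sub_left (a c t : ℝ) :
    MeasurePreserving (t - ·) (unif a c) (unif (t - c) (t - a)) :=
  ⟨measurable_const.sub measurable_id, unif_map_sub_left a c t⟩

section ProdLeftComm

variable {α β γ : Type*} [MeasurableSpace α] [MeasurableSpace β] [MeasurableSpace γ]
  {μ : Measure α} {ν : Measure β} {ρ : Measure γ} [SFinite μ] [SFinite ν] [SFinite ρ]

theorem measurePreserving_prodLeftComm :
    MeasurePreserving (fun p : α × β × γ => (p.2.1, p.1, p.2.2))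
      (μ.prod (ν.prod ρ)) (ν.prod (μ.prod ρ)) := by
  have hassoc := measurePreserving_prodAssoc ν μ ρ
  have hswap : MeasurePreserving (Prod.map Prod.swap id) ((μ.prod ν).prod ρ) ((ν.prod μ).prod ρ) :=
    Measure.measurePreserving_swap.prod (MeasurePreserving.id ρ)
  exact (hassoc.comp hswap).comp (measurePreserving_prodAssoc μ ν ρ).symm

theorem MeasureTheory.MeasurePreserving.prod_exchange {f : α → β} {g : β → α}
    (hf : MeasurePreserving f μ ν) (hg : MeasurePreserving g ν μ) :
    MeasurePreserving (fun p : α × β × γ => (g p.2.1, f p.1, p.2.2))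
      (μ.prod (ν.prod ρ)) (μ.prod (ν.prod ρ)) :=
  (hg.prod (hf.prod (MeasurePreserving.id ρ))).comp measurePreserving_prodLeftComm

end ProdLeftComm

theorem abs_two_mul_sub_sub (b x : ℝ) : |2 * b - x - b| = |x - b| := by
  rw [show 2 * b - x - b = -(x - b) by ring, abs_neg]

theorem prob_bisector_equi_range_unaffected_by_third_object_general
    (l₁ u₁ l₂ u₂ l₃ u₃ b : ℝ)
    (hlen : u₁ - l₁ = u₂ - l₂)
    (hb : b = ((l₁ + u₁) / 2 + (l₂ + u₂) / 2) / 2) :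
    ((unif l₁ u₁).prod ((unif l₂ u₂).prod (unif l₃ u₃)))
        {p : ℝ × ℝ × ℝ | |p.1 - b| < |p.2.1 - b| ∧ |p.1 - b| < |p.2.2 - b|}
      = ((unif l₁ u₁).prod ((unif l₂ u₂).prod (unif l₃ u₃)))
        {p : ℝ × ℝ × ℝ | |p.2.1 - b| < |p.1 - b| ∧ |p.2.1 - b| < |p.2.2 - b|} := by
  have h₁₂ : MeasurePreserving (2 * b - ·) (unif l₁ u₁) (unif l₂ u₂) := by
    convert measurePreserving_unif_sub_left l₁ u₁ (2 * b) using 2 <;> rw [hb] <;> linarith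
  have h₂₁ : MeasurePreserving (2 * b - ·) (unif l₂ u₂) (unif l₁ u₁) := by
    convert measurePreserving_unif_sub_left l₂ u₂ (2 * b) using 2 <;> rw [hb] <;> linarith
  have hT := h₁₂.prod_exchange h₂₁ (ρ := unif l₃ u₃)
  have hmeas : MeasurableSet
      {p : ℝ × ℝ × ℝ | |p.1 - b| < |p.2.1 - b| ∧ |p.1 - b| < |p.2.2 - b|} :=
    measurableSet_setOfPred.2 (by fun_prop)
  rw [← hT.measure_preimage hmeas.nullMeasurableSet]
  congr 1
  ext p
  simp only [Set.mem_preimage, Set.mem_ofPred_eq, abs_two_mul_sub_sub]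

theorem prob_bisector_equi_range_unaffected_by_third_object
    (l₁ u₁ l₂ u₂ l₃ u₃ b : ℝ)
    (h₁ : l₁ < u₁) (h₂ : l₂ < u₂) (h₃ : l₃ < u₃)
    (hlen : u₁ - l₁ = u₂ - l₂)
    (hmid : (l₁ + u₁) / 2 ≠ (l₂ + u₂) / 2)
    (hb : b = ((l₁ + u₁) / 2 + (l₂ + u₂) / 2) / 2) :
    ((unif l₁ u₁).prod ((unif l₂ u₂).prod (unif l₃ u₃)))
        {p : ℝ × ℝ × ℝ | |p.1 - b| < |p.2.1 - b| ∧ |p.1 - b| < |p.2.2 - b|}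
      = ((unif l₁ u₁).prod ((unif l₂ u₂).prod (unif l₃ u₃)))
        {p : ℝ × ℝ × ℝ | |p.2.1 - b| < |p.1 - b| ∧ |p.2.1 - b| < |p.2.2 - b|} :=
  prob_bisector_equi_range_unaffected_by_third_object_general l₁ u₁ l₂ u₂ l₃ u₃ b hlen hb
end

section
/- The fraction of a disk lying inside a circle passing through its center is strictly decreasing in the disk's radius: let c and x be distinct points of the Euclidean plane and set R = dist(c,x) > 0. Then for all radii 0 < r₁ < r₂, volume(B̄(c,r₂) ∩ B̄(x,R)) · r₁² < volume(B̄(c,r₁) ∩ B̄(x,R)) · r₂²; equivalently, the proportion volume(B̄(c,r) ∩ B̄(x,R)) / volume(B̄(c,r)) of the disk B̄(c,r) contained in the disk B̄(x,R) (whose boundary circle passes through c) strictly decreases as r increases. -/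
/-!
Dilating by `t = r₂ / r₁` from `c` maps the lens `B̄(c, r₁) ∩ B̄(x, R)` onto
`B̄(c, r₂) ∩ B̄(x', t R)` and multiplies its measure by `t ^ n` in dimension `n`. Since `c` lies
on the sphere `∂B̄(x, R)`, the dilated ball `B̄(x', t R)` contains `B̄(x, R)` and touches it at
`c`, so the dilated lens contains `B̄(c, r₂) ∩ B̄(x, R)`. The inclusion is strict in measure
because the open crescent between the two spheres accumulates at `c` when `n ≥ 2`, hence meets
`B(c, r₂)`.
-/

open MeasureTheory Metric Module AffineMap Filter Topology
open scoped ENNReal RealInnerProductSpace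

section Homothety

variable {V : Type*} [NormedAddCommGroup V] [NormedSpace ℝ V]

theorem dist_homothety_homothety (c p q : V) (t : ℝ) :
    dist (homothety c t p) (homothety c t q) = |t| * dist p q := by
  rw [homothety_apply, homothety_apply, vadd_eq_add, vadd_eq_add, dist_add_right, vsub_eq_sub,
    vsub_eq_sub, dist_smul₀, dist_sub_right, Real.norm_eq_abs]

theorem image_homothety_closedBall (c p : V) {t : ℝ} (ht : t ≠ 0) (r : ℝ) :
    homothety c t '' closedBall p r = closedBall (homothety c t p) (|t| * r) := by
  have hinv : ∀ y, homothety c t (homothety c t⁻¹ y) = y := fun y => by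
    rw [← homothety_mul_apply, mul_inv_cancel₀ ht, homothety_one, id_apply]
  ext z
  simp only [Set.mem_image, mem_closedBall]
  constructor
  · rintro ⟨y, hy, rfl⟩
    rw [dist_homothety_homothety]
    gcongr
  · intro hz
    refine ⟨homothety c t⁻¹ z, ?_, hinv z⟩
    rwa [← mul_le_mul_iff_of_pos_left (abs_pos.2 ht), ← dist_homothety_homothety, hinv]

theorem closedBall_subset_closedBall_homothety (c x : V) {t : ℝ} (ht : 1 ≤ t) :
    closedBall x (dist c x) ⊆ closedBall (homothety c t x) (t * dist c x) := by
  refine closedBall_subset_closedBall' (le_of_eq ?_)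
  rw [dist_self_homothety, Real.norm_eq_abs, abs_of_nonpos (by linarith)]
  ring

end Homothety

section InnerProduct

variable {V : Type*} [NormedAddCommGroup V] [InnerProductSpace ℝ V]

theorem norm_smul_add_smul_sq_of_inner_eq_zero {d w : V} (h : ⟪d, w⟫ = 0) (a b : ℝ) :
    ‖a • d + b • w‖ ^ 2 = a ^ 2 * ‖d‖ ^ 2 + b ^ 2 * ‖w‖ ^ 2 := by
  have h' : ⟪a • d, b • w⟫ = 0 := by rw [real_inner_smul_left, real_inner_smul_right, h]; ring
  rw [sq, norm_add_sq_eq_norm_sq_add_norm_sq_real h', norm_smul, norm_smul, Real.norm_eq_abs,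
    Real.norm_eq_abs, ← sq_abs a, ← sq_abs b]
  ring

variable [FiniteDimensional ℝ V]

theorem exists_inner_eq_zero_norm_eq (hV : 2 ≤ finrank ℝ V) (d : V) {s : ℝ} (hs : 0 ≤ s) :
    ∃ w : V, ⟪d, w⟫ = 0 ∧ ‖w‖ = s := by
  have hpos : 0 < finrank ℝ (ℝ ∙ d)ᗮ := by
    have := Submodule.finrank_add_finrank_orthogonal (ℝ ∙ d)
    have := finrank_span_le_card (R := ℝ) ({d} : Set V)
    simp only [Set.toFinset_singleton, Finset.card_singleton] at this
    omega
  obtain ⟨⟨w, hw⟩, hw0⟩ := finrank_pos_iff_exists_ne_zero.1 hpos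
  have hw0 : w ≠ 0 := by simpa using hw0
  refine ⟨(s / ‖w‖) • w, ?_, ?_⟩
  · rw [real_inner_smul_right, Submodule.mem_orthogonal_singleton_iff_inner_right.1 hw, mul_zero]
  · rw [norm_smul, Real.norm_of_nonneg (by positivity), div_mul_cancel₀ _ (norm_ne_zero_iff.2 hw0)]

end InnerProduct

section Lens

variable {V : Type*} [NormedAddCommGroup V] [InnerProductSpace ℝ V] [FiniteDimensional ℝ V]

theorem mem_closure_ball_homothety_diff_closedBall (hV : 2 ≤ finrank ℝ V) {c x : V}
    (hcx : c ≠ x) {t : ℝ} (ht : 1 < t) :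
    c ∈ closure (ball (homothety c t x) (t * dist c x) \ closedBall x (dist c x)) := by
  set R := dist c x
  have hR : 0 < R := dist_pos.2 hcx
  have hd : ‖x - c‖ = R := by rw [← dist_eq_norm, dist_comm]
  obtain ⟨w, hdw, hw⟩ := exists_inner_eq_zero_norm_eq hV (x - c) (s := √(1 + t) * R)
    (by positivity)
  -- a parabola through `c`, tangent to both spheres there and lying between them near `c`
  let p : ℝ → V := fun s => s ^ 2 • (x - c) + s • w + c
  have hdist (a s : ℝ) :
      dist (p s) (homothety c a x) ^ 2 = ((s ^ 2 - a) ^ 2 + s ^ 2 * (1 + t)) * R ^ 2 := by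
    have hsub : p s - homothety c a x = (s ^ 2 - a) • (x - c) + s • w := by
      simp only [p, homothety_apply, vsub_eq_sub, vadd_eq_add, sub_smul]
      abel
    rw [dist_eq_norm, hsub, norm_smul_add_smul_sq_of_inner_eq_zero hdw, hd, hw, mul_pow,
      Real.sq_sqrt (by linarith)]
    ring
  have hlim : Tendsto p (𝓝[≠] 0) (𝓝 c) := by
    have hp : Continuous p := by fun_prop
    simpa [p] using (hp.tendsto 0).mono_left nhdsWithin_le_nhds
  have hsmall : ∀ᶠ s in 𝓝[≠] (0 : ℝ), s ^ 2 < t - 1 :=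
    (((continuous_pow 2).tendsto' 0 0 (by simp)).mono_left nhdsWithin_le_nhds).eventually_lt_const
      (by linarith)
  refine mem_closure_of_tendsto hlim ?_
  filter_upwards [hsmall, self_mem_nhdsWithin] with s hs hs0
  have hs2 : 0 < s ^ 2 := pow_two_pos_of_ne_zero hs0
  constructor
  · rw [mem_ball]
    refine lt_of_pow_lt_pow_left₀ 2 (by positivity) ?_
    rw [hdist]
    nlinarith [mul_pos (mul_pos hs2 (sub_pos.2 hs)) (pow_pos hR 2)]
  · have hx := hdist 1 s
    rw [homothety_one, id_apply] at hx
    rw [mem_closedBall, not_le]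
    refine lt_of_pow_lt_pow_left₀ 2 dist_nonneg ?_
    rw [hx]
    nlinarith [mul_pos (mul_pos hs2 (sub_pos.2 ht)) (pow_pos hR 2)]

end Lens

section Measure

variable {V : Type*} [NormedAddCommGroup V] [InnerProductSpace ℝ V] [FiniteDimensional ℝ V]
  [MeasurableSpace V] [BorelSpace V] (μ : Measure V) [μ.IsAddHaarMeasure]

theorem measure_closedBall_inter_closedBall_lt_homothety (hV : 2 ≤ finrank ℝ V) {c x : V}
    (hcx : c ≠ x) {t r : ℝ} (ht : 1 < t) (hr : 0 < r) :
    μ (closedBall c r ∩ closedBall x (dist c x))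
      < μ (closedBall c r ∩ closedBall (homothety c t x) (t * dist c x)) := by
  set s := closedBall c r ∩ closedBall x (dist c x)
  set s' := closedBall c r ∩ closedBall (homothety c t x) (t * dist c x)
  have hss' : s ⊆ s' :=
    Set.inter_subset_inter_right _ (closedBall_subset_closedBall_homothety c x ht.le)
  have hs : μ s ≠ ∞ := ((measure_mono Set.inter_subset_left).trans_lt measure_closedBall_lt_top).ne
  have hcrescent : 0 < μ (s' \ s) := by
    obtain ⟨p, ⟨hpx', hpx⟩, hpc⟩ :=
      mem_closure_iff.1 (mem_closure_ball_homothety_diff_closedBall hV hcx ht) r hr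
    have hU : IsOpen
        (ball c r ∩ (ball (homothety c t x) (t * dist c x) \ closedBall x (dist c x))) :=
      isOpen_ball.inter (isOpen_ball.sdiff isClosed_closedBall)
    refine (hU.measure_pos μ ⟨p, mem_ball_comm.1 hpc, hpx', hpx⟩).trans_le (measure_mono ?_)
    rintro q ⟨hqc, hqx', hqx⟩
    exact ⟨⟨ball_subset_closedBall hqc, ball_subset_closedBall hqx'⟩, fun hq => hqx hq.2⟩
  calc μ s < μ s + μ (s' \ s) := ENNReal.lt_add_right hs hcrescent.ne'
    _ = μ s' := by
      have hs_meas : MeasurableSet s := measurableSet_closedBall.inter measurableSet_closedBall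
      rw [measure_add_sdiff hs_meas.nullMeasurableSet, Set.union_eq_self_of_subset_left hss']

theorem measure_closedBall_inter_closedBall_mul_pow_lt (hV : 2 ≤ finrank ℝ V) {c x : V}
    (hcx : c ≠ x) {r₁ r₂ : ℝ} (h₁ : 0 < r₁) (h₁₂ : r₁ < r₂) :
    μ (closedBall c r₂ ∩ closedBall x (dist c x)) * ENNReal.ofReal (r₁ ^ finrank ℝ V)
      < μ (closedBall c r₁ ∩ closedBall x (dist c x)) * ENNReal.ofReal (r₂ ^ finrank ℝ V) := by
  set t := r₂ / r₁
  have ht : 1 < t := (one_lt_div h₁).2 h₁₂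
  have htr : t * r₁ = r₂ := div_mul_cancel₀ _ h₁.ne'
  have himage : homothety c t '' (closedBall c r₁ ∩ closedBall x (dist c x))
      = closedBall c r₂ ∩ closedBall (homothety c t x) (t * dist c x) := by
    rw [Set.image_inter (homothety_injective c (by positivity)), image_homothety_closedBall _ _
      (by positivity), image_homothety_closedBall _ _ (by positivity), homothety_apply_same,
      abs_of_pos (by positivity), htr]
  have hscale : μ (closedBall c r₂ ∩ closedBall (homothety c t x) (t * dist c x))
      = ENNReal.ofReal (t ^ finrank ℝ V) * μ (closedBall c r₁ ∩ closedBall x (dist c x)) := by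
    rw [← himage, Measure.addHaar_image_homothety, abs_of_pos (by positivity)]
  calc μ (closedBall c r₂ ∩ closedBall x (dist c x)) * ENNReal.ofReal (r₁ ^ finrank ℝ V)
      < μ (closedBall c r₂ ∩ closedBall (homothety c t x) (t * dist c x))
          * ENNReal.ofReal (r₁ ^ finrank ℝ V) :=
        ENNReal.mul_lt_mul_left (by positivity) ENNReal.ofReal_ne_top
          (measure_closedBall_inter_closedBall_lt_homothety μ hV hcx ht (h₁.trans h₁₂))
    _ = μ (closedBall c r₁ ∩ closedBall x (dist c x)) * ENNReal.ofReal (r₂ ^ finrank ℝ V) := by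
      rw [hscale, mul_comm (ENNReal.ofReal _), mul_assoc, ← ENNReal.ofReal_mul (by positivity),
        ← mul_pow, htr]

end Measure

theorem disk_fraction_inside_circle_through_center_strict_anti
    (c x : EuclideanSpace ℝ (Fin 2)) (hcx : c ≠ x)
    (r₁ r₂ : ℝ) (h₁ : 0 < r₁) (h₁₂ : r₁ < r₂) :
    volume (Metric.closedBall c r₂ ∩ Metric.closedBall x (dist c x)) *
        ENNReal.ofReal (r₁ ^ 2)
      < volume (Metric.closedBall c r₁ ∩ Metric.closedBall x (dist c x)) *
          ENNReal.ofReal (r₂ ^ 2) := by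
  simpa only [finrank_euclideanSpace_fin] using
    measure_closedBall_inter_closedBall_mul_pow_lt volume
      (by rw [finrank_euclideanSpace_fin]) hcx h₁ h₁₂
end

section
/- The nearest-neighbor probability of one uncertain 1D object against another is a continuous function of the query point: for uncertain 1D objects o₁ = [l₁,u₁] and o₂ = [l₂,u₂] with l₁ < u₁ and l₂ < u₂, the function p : ℝ → ℝ defined by p(q) = (U[l₁,u₁] ⊗ U[l₂,u₂]) {(x,y) | |x − q| < |y − q|} is continuous on ℝ. (In particular, between any two query points where the most probable nearest neighbor among {o₁, o₂} changes, there is a probabilistic bisector point where p equals 1/2.) -/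
open MeasureTheory
open scoped ENNReal

/-!
As the query point moves, the event `|x - q| < |y - q|` changes only for pairs near the tie set
`|x - q₀| = |y - q₀|`; its indicator therefore converges pointwise off that set, and dominated
convergence for the finite product measure gives continuity. The tie set is null because each of
its sections `{y | |y - q₀| = |x - q₀|}` has at most two points and the uniform law has no atoms.
-/

open Filter Topology ProbabilityTheory

theorem eventually_lt_iff_of_ne {X : Type*} [TopologicalSpace X] {F G : X → ℝ} {x₀ : X}
    (hF : ContinuousAt F x₀) (hG : ContinuousAt G x₀) (hne : F x₀ ≠ G x₀) :
    ∀ᶠ x in 𝓝 x₀, F x < G x ↔ F x₀ < G x₀ := by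
  rcases hne.lt_or_gt with hlt | hgt
  · filter_upwards [hF.eventually_lt hG hlt] with x hx
    exact iff_of_true hx hlt
  · filter_upwards [hG.eventually_lt hF hgt] with x hx
    exact iff_of_false hx.not_gt hgt.not_gt

theorem continuousAt_measure_setOf_lt {X α : Type*} [TopologicalSpace X]
    [FirstCountableTopology X] [MeasurableSpace α] {μ : Measure α} [IsFiniteMeasure μ]
    {f g : X → α → ℝ} {x₀ : X} (hf : ∀ a, ContinuousAt (f · a) x₀)
    (hg : ∀ a, ContinuousAt (g · a) x₀) (hfm : ∀ x, Measurable (f x))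
    (hgm : ∀ x, Measurable (g x)) (h_null : μ {a | f x₀ a = g x₀ a} = 0) :
    ContinuousAt (fun x => μ {a | f x a < g x a}) x₀ := by
  refine tendsto_measure_of_ae_tendsto_indicator_of_isFiniteMeasure (𝓝 x₀)
    (measurableSet_lt (hfm x₀) (hgm x₀)) (fun x => measurableSet_lt (hfm x) (hgm x)) ?_
  filter_upwards [measure_eq_zero_iff_ae_notMem.mp h_null] with a ha
  exact eventually_lt_iff_of_ne (hf a) (hg a) ha

theorem measure_prod_setOf_abs_sub_eq_abs_sub {μ ν : Measure ℝ} [SFinite ν]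
    [NullSingletonClass ν] (q : ℝ) :
    μ.prod ν {xy : ℝ × ℝ | |xy.1 - q| = |xy.2 - q|} = 0 := by
  have hmeas : Measurable fun r : ℝ => |r - q| := (measurable_id.sub_const q).abs
  refine (Measure.measure_prod_null
    (measurableSet_eq_fun (hmeas.comp measurable_fst) (hmeas.comp measurable_snd))).mpr
    (ae_of_all _ fun x => ?_)
  have hsub : {y : ℝ | |x - q| = |y - q|} ⊆ {x, 2 * q - x} := by
    intro y hy
    rw [Set.mem_insert_iff, Set.mem_singleton_iff]
    rcases abs_eq_abs.mp hy with h | h <;> [left; right] <;> linarith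
  exact ((Set.toFinite _).subset hsub).measure_zero ν

-- `unif a b` is the conditional measure `volume[|Icc a b]`, which is `0` when `b ≤ a`.
instance (a b : ℝ) : IsFiniteMeasure (unif a b) :=
  inferInstanceAs (IsFiniteMeasure volume[|Set.Icc a b])

instance inst_s14 (a b : ℝ) : NullSingletonClass (unif a b) :=
  ⟨fun x => by simp [unif]⟩

theorem nnProb_continuous_general (l₁ u₁ l₂ u₂ : ℝ) :
    Continuous (fun q : ℝ => (nnProb l₁ u₁ l₂ u₂ q).toReal) := by
  have hcont : ∀ r : ℝ, Continuous fun q : ℝ => |r - q| :=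
    fun r => (continuous_const.sub continuous_id).abs
  have hmeas : ∀ q : ℝ, Measurable fun r : ℝ => |r - q| :=
    fun q => (measurable_id.sub_const q).abs
  refine continuous_iff_continuousAt.mpr fun q => ?_
  have hq : ContinuousAt (nnProb l₁ u₁ l₂ u₂) q :=
    continuousAt_measure_setOf_lt (fun xy => (hcont xy.1).continuousAt)
      (fun xy => (hcont xy.2).continuousAt) (fun q => (hmeas q).comp measurable_fst)
      (fun q => (hmeas q).comp measurable_snd) (measure_prod_setOf_abs_sub_eq_abs_sub q)
  have hfin : nnProb l₁ u₁ l₂ u₂ q ≠ ∞ := measure_ne_top _ _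
  exact (ENNReal.continuousAt_toReal hfin).comp hq

theorem nnProb_continuous (l₁ u₁ l₂ u₂ : ℝ) (h₁ : l₁ < u₁) (h₂ : l₂ < u₂) :
    Continuous (fun q : ℝ => (nnProb l₁ u₁ l₂ u₂ q).toReal) :=
  nnProb_continuous_general l₁ u₁ l₂ u₂
end
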